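/- arXiv:2202.07694 — 5 statements merged into one kernel-verified Lean document; each statement's English description precedes it below -/
import Mathlib

section
/- Let G be a nonempty gapset with multiplicity m, Kunz coordinates (k_1, …, k_{m−1}), conductor c and depth q = ⌈c/m⌉. Then q = max{k_i : 1 ≤ i ≤ m−1}. -/
def IsGapset (G : Finset ℕ) : Prop :=
  0 ∉ G ∧ ∀ z ∈ G, ∀ x y : ℕ, 0 < x → 0 < y → x + y = z → x ∈ G ∨ y ∈ G

def IsNumSgp (S : Set ℕ) : Prop :=
  0 ∈ S ∧ (∀ a ∈ S, ∀ b ∈ S, a + b ∈ S) ∧ Sᶜ.Finite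

noncomputable def mult (G : Finset ℕ) : ℕ := sInf {s : ℕ | 0 < s ∧ s ∉ G}

noncomputable def kunz (G : Finset ℕ) (i : ℕ) : ℕ := (G.filter (fun z => z % mult G = i)).card

noncomputable def gapConductor (G : Finset ℕ) : ℕ := sInf {s : ℕ | 0 < s ∧ ∀ n : ℕ, s + n ∉ G}

noncomputable def gapDepth (G : Finset ℕ) : ℕ := (gapConductor G + mult G - 1) / mult G

def KunzIneq (m : ℕ) (k : ℕ → ℕ) : Prop :=
  (∀ i j : ℕ, 1 ≤ i → i ≤ j → j ≤ m - 1 → i + j < m → k (i + j) ≤ k i + k j) ∧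
  (∀ i j : ℕ, 1 ≤ i → i ≤ j → j ≤ m - 1 → m < i + j → k (i + j - m) ≤ k i + k j + 1)

/-!
Subtracting the multiplicity `m` from an element `z > m` of a gapset leaves an element, since
`z = m + (z - m)` with `m ∉ G`. Hence with the largest gap `z`, all of `z, z - m, z - 2m, …, z % m`
lie in `G`: this gives `⌊z/m⌋ + 1` gaps in the class of `z % m`, which is not `0` because `0 ∉ G`.
No class can hold more, since its gaps are distinct numbers `≤ z` sharing a residue mod `m`.
Finally the conductor is `z + 1`, so the depth is `⌊z/m⌋ + 1`.
-/

open Finset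

theorem Finset.card_filter_mod_eq_le_div_add_one (s : Finset ℕ) (m i N : ℕ)
    (hs : ∀ z ∈ s, z ≤ N) : #(s.filter (· % m = i)) ≤ N / m + 1 := by
  rw [← card_range (N / m + 1)]
  refine card_le_card_of_injOn (· / m) (fun z hz => ?_) (fun a ha b hb hab => ?_)
  · simpa [Nat.lt_succ_iff] using Nat.div_le_div_right (c := m) (hs z (mem_filter.1 hz).1)
  · rw [← Nat.div_add_mod a m, ← Nat.div_add_mod b m, (mem_filter.1 ha).2, (mem_filter.1 hb).2]
    simp_all

theorem mult_mem_setOf (G : Finset ℕ) : mult G ∈ {s : ℕ | 0 < s ∧ s ∉ G} :=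
  Nat.sInf_mem
    ⟨G.sup id + 1, Nat.succ_pos _, fun h => Nat.not_succ_le_self _ (G.le_sup (f := id) h)⟩

theorem mult_pos (G : Finset ℕ) : 0 < mult G := (mult_mem_setOf G).1

theorem mult_notMem (G : Finset ℕ) : mult G ∉ G := (mult_mem_setOf G).2

theorem gapConductor_eq_max'_add_one {G : Finset ℕ} (hne : G.Nonempty) :
    gapConductor G = G.max' hne + 1 := by
  have hmem : G.max' hne + 1 ∈ {s : ℕ | 0 < s ∧ ∀ n : ℕ, s + n ∉ G} :=
    ⟨Nat.succ_pos _, fun n hn => by have := G.le_max' _ hn; omega⟩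
  refine le_antisymm (Nat.sInf_le hmem) (le_csInf ⟨_, hmem⟩ ?_)
  rintro s ⟨-, hs⟩
  by_contra! hlt
  exact hs (G.max' hne - s) (by rw [Nat.add_sub_cancel' (by omega)]; exact G.max'_mem hne)

theorem gapDepth_eq_max'_div_add_one {G : Finset ℕ} (hne : G.Nonempty) :
    gapDepth G = G.max' hne / mult G + 1 := by
  rw [gapDepth, gapConductor_eq_max'_add_one hne, Nat.add_right_comm, Nat.add_sub_cancel,
    Nat.add_div_right _ (mult_pos G)]

namespace IsGapset

variable {G : Finset ℕ} (hG : IsGapset G)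
include hG

theorem sub_mult_mem {z : ℕ} (hz : z ∈ G) (hle : mult G ≤ z) : z - mult G ∈ G := by
  have hlt : mult G < z := lt_of_le_of_ne hle (by rintro rfl; exact mult_notMem G hz)
  exact (hG.2 z hz _ _ (mult_pos G) (by omega) (by omega)).resolve_left (mult_notMem G)

theorem sub_mul_mult_mem {z : ℕ} (hz : z ∈ G) {j : ℕ} (hj : mult G * j ≤ z) :
    z - mult G * j ∈ G := by
  induction j with
  | zero => simpa using hz
  | succ j ih =>
    rw [Nat.mul_succ, ← Nat.sub_sub]
    exact hG.sub_mult_mem (ih ((Nat.mul_le_mul_left _ j.le_succ).trans hj)) (by rw [Nat.mul_succ] at hj; omega)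

theorem mod_mult_ne_zero {z : ℕ} (hz : z ∈ G) : z % mult G ≠ 0 := by
  have h := hG.sub_mul_mult_mem hz (Nat.mul_div_le z (mult G))
  rw [← Nat.mod_eq_sub_mul_div] at h
  exact fun h0 => hG.1 (h0 ▸ h)

theorem div_mult_lt_kunz {z : ℕ} (hz : z ∈ G) : z / mult G < kunz G (z % mult G) := by
  have hm := mult_pos G
  have hle {j : ℕ} (hj : j ∈ range (z / mult G + 1)) : mult G * j ≤ z := by
    rw [Nat.mul_comm]
    exact Nat.mul_le_of_le_div _ _ _ (Nat.lt_succ_iff.1 (mem_range.1 hj))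
  rw [Nat.lt_iff_add_one_le, ← card_range (z / mult G + 1)]
  refine card_le_card_of_injOn (fun j => z - mult G * j) (fun j hj => ?_) (fun a ha b hb hab => ?_)
  · exact mem_filter.2 ⟨hG.sub_mul_mult_mem hz (hle hj), Nat.sub_mul_mod (hle hj)⟩
  · have := hle ha
    have := hle hb
    exact Nat.eq_of_mul_eq_mul_left hm (by simp only at hab; omega)

end IsGapset

theorem depth_eq_max_kunz (G : Finset ℕ) (hG : IsGapset G) (hne : G.Nonempty) :
    gapDepth G = (Finset.Ico 1 (mult G)).sup (kunz G) := by
  set z := G.max' hne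
  have hz : z ∈ G := G.max'_mem hne
  rw [gapDepth_eq_max'_div_add_one hne]
  refine le_antisymm ?_
    (Finset.sup_le fun i _ => card_filter_mod_eq_le_div_add_one G _ i z (G.le_max' · ·))
  calc z / mult G + 1 ≤ kunz G (z % mult G) := hG.div_mult_lt_kunz hz
    _ ≤ _ := le_sup (mem_Ico.2 ⟨Nat.one_le_iff_ne_zero.2 (hG.mod_mult_ne_zero hz),
        Nat.mod_lt _ (mult_pos G)⟩)
end

section
/- A tuple (k_1, …, k_{m−1}) ∈ ℕ^{m−1} (with each k_i ≥ 1) is the Kunz coordinate vector of some numerical semigroup with multiplicity m if and only if: k_i + k_j ≥ k_{i+j} for all 1 ≤ i ≤ j ≤ m−1 with i+j < m, and k_i + k_j + 1 ≥ k_{i+j−m} for all 1 ≤ i ≤ j ≤ m−1 with i+j > m. -/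
noncomputable def multS (S : Set ℕ) : ℕ := sInf {s : ℕ | s ∈ S ∧ 0 < s}

noncomputable def kunzS (S : Set ℕ) (i : ℕ) : ℕ := (sInf {s : ℕ | s ∈ S ∧ s % multS S = i} - i) / multS S

/-!
The Apéry element `w i = min {s ∈ S | s ≡ i [MOD m]}` of a numerical semigroup of multiplicity `m`
equals `m * k i + i`. Since `w i + w j ∈ S` lies in the class of `i + j`, we get
`w ((i + j) % m) ≤ w i + w j`, which in terms of the `k i` is exactly the pair of Kunz inequalities;
the `+ 1` comes from the carry when `i + j > m`.

Conversely, given `k`, the set `{n | n % m = 0 ∨ k (n % m) ≤ n / m}` is closed under addition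
by the Kunz inequalities, has finite complement, has multiplicity `m` because every `k i ≥ 1`,
and its Apéry elements are `m * k i + i`.
-/

noncomputable def apery (S : Set ℕ) (m i : ℕ) : ℕ := sInf {s : ℕ | s ∈ S ∧ s % m = i}

theorem kunzS_eq_apery (S : Set ℕ) (i : ℕ) :
    kunzS S i = (apery S (multS S) i - i) / multS S := rfl

namespace KunzIneq

variable {m : ℕ} {k : ℕ → ℕ}

theorem congr {k' : ℕ → ℕ} (h : ∀ i, 1 ≤ i → i ≤ m - 1 → k i = k' i) (hk : KunzIneq m k) :
    KunzIneq m k' := by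
  refine ⟨fun i j hi hij hj hlt => ?_, fun i j hi hij hj hlt => ?_⟩
  · rw [← h i hi (by omega), ← h j (by omega) hj, ← h (i + j) (by omega) (by omega)]
    exact hk.1 i j hi hij hj hlt
  · rw [← h i hi (by omega), ← h j (by omega) hj, ← h (i + j - m) (by omega) (by omega)]
    exact hk.2 i j hi hij hj hlt

theorem le_add (hk : KunzIneq m k) {i j : ℕ} (hi : 0 < i) (hj : 0 < j) (hij : i + j < m) :
    k (i + j) ≤ k i + k j := by
  rcases le_total i j with h | h
  · exact hk.1 i j hi h (by omega) hij
  · rw [add_comm i, add_comm (k i)]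
    exact hk.1 j i hj h (by omega) (by omega)

theorem le_add_add_one (hk : KunzIneq m k) {i j : ℕ} (hi : i < m) (hj : j < m) (hij : m < i + j) :
    k (i + j - m) ≤ k i + k j + 1 := by
  rcases le_total i j with h | h
  · exact hk.2 i j (by omega) h (by omega) hij
  · rw [add_comm i, add_comm (k i)]
    exact hk.2 j i (by omega) h (by omega) (by omega)

end KunzIneq

theorem add_mod_eq_add_sub_of_lt {m i j : ℕ} (hi : i < m) (hj : j < m) (hij : m < i + j) :
    (i + j) % m = i + j - m := by
  rw [Nat.mod_eq_sub_mod hij.le, Nat.mod_eq_of_lt (by omega)]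

namespace IsNumSgp

variable {S : Set ℕ}

theorem exists_forall_gt_mem (hS : IsNumSgp S) : ∃ b, ∀ n, b < n → n ∈ S := by
  obtain ⟨b, hb⟩ := hS.2.2.bddAbove
  exact ⟨b, fun n hn => by_contra fun h => absurd (hb h) (by omega)⟩

theorem apery_mem (hS : IsNumSgp S) {m i : ℕ} (hi : i < m) :
    apery S m i ∈ S ∧ apery S m i % m = i := by
  obtain ⟨b, hb⟩ := hS.exists_forall_gt_mem
  refine Nat.sInf_mem (s := {s | s ∈ S ∧ s % m = i}) ⟨i + m * (b + 1), hb _ ?_, ?_⟩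
  · have : b + 1 ≤ m * (b + 1) := Nat.le_mul_of_pos_left _ (by omega)
    omega
  · rw [Nat.add_mul_mod_self_left, Nat.mod_eq_of_lt hi]

theorem apery_mod_add_le (hS : IsNumSgp S) {m i j : ℕ} (hi : i < m) (hj : j < m) :
    apery S m ((i + j) % m) ≤ apery S m i + apery S m j := by
  obtain ⟨hwi, hmodi⟩ := hS.apery_mem hi
  obtain ⟨hwj, hmodj⟩ := hS.apery_mem hj
  refine Nat.sInf_le ⟨hS.2.1 _ hwi _ hwj, ?_⟩
  rw [Nat.add_mod, hmodi, hmodj]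

theorem mul_kunzS_add (hS : IsNumSgp S) {i : ℕ} (hi : i < multS S) :
    multS S * kunzS S i + i = apery S (multS S) i := by
  set w := apery S (multS S) i
  have hmod : w % multS S = i := (hS.apery_mem hi).2
  have hdiv := Nat.div_add_mod w (multS S)
  rw [kunzS_eq_apery, show w - i = multS S * (w / multS S) by omega,
    Nat.mul_div_cancel_left _ (by omega)]
  omega

theorem kunzIneq (hS : IsNumSgp S) (hm : 0 < multS S) : KunzIneq (multS S) (kunzS S) := by
  refine ⟨fun i j hi hij hj hlt => ?_, fun i j hi hij hj hlt => ?_⟩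
  · have hw := hS.apery_mod_add_le (m := multS S) (i := i) (j := j) (by omega) (by omega)
    rw [Nat.mod_eq_of_lt hlt, ← hS.mul_kunzS_add hlt, ← hS.mul_kunzS_add (i := i) (by omega),
      ← hS.mul_kunzS_add (i := j) (by omega)] at hw
    refine Nat.le_of_mul_le_mul_left ?_ hm
    rw [mul_add]
    omega
  · have hw := hS.apery_mod_add_le (m := multS S) (i := i) (j := j) (by omega) (by omega)
    rw [add_mod_eq_add_sub_of_lt (by omega) (by omega) hlt,
      ← hS.mul_kunzS_add (i := i + j - multS S) (by omega), ← hS.mul_kunzS_add (i := i) (by omega),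
      ← hS.mul_kunzS_add (i := j) (by omega)] at hw
    refine Nat.le_of_mul_le_mul_left ?_ hm
    rw [mul_add, mul_add, mul_one]
    omega

end IsNumSgp

def kunzSet (m : ℕ) (k : ℕ → ℕ) : Set ℕ := {n | n % m = 0 ∨ k (n % m) ≤ n / m}

namespace kunzSet

variable {m : ℕ} {k : ℕ → ℕ}

theorem mul_add_mem_iff (hm : 0 < m) {q r : ℕ} (hr : r < m) :
    m * q + r ∈ kunzSet m k ↔ r = 0 ∨ k r ≤ q := by
  simp only [kunzSet, Set.mem_ofPred_eq, Nat.mul_add_mod, Nat.mul_add_div hm, Nat.mod_eq_of_lt hr,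
    Nat.div_eq_of_lt hr, add_zero]

theorem exists_mul_add (hm : 0 < m) (n : ℕ) : ∃ q r, r < m ∧ n = m * q + r :=
  ⟨n / m, n % m, Nat.mod_lt _ hm, (Nat.div_add_mod n m).symm⟩

theorem add_mem (hm : 0 < m) (hk : KunzIneq m k) {a b : ℕ} (ha : a ∈ kunzSet m k)
    (hb : b ∈ kunzSet m k) : a + b ∈ kunzSet m k := by
  obtain ⟨qa, ra, hra, rfl⟩ := exists_mul_add hm a
  obtain ⟨qb, rb, hrb, rfl⟩ := exists_mul_add hm b
  rw [mul_add_mem_iff hm hra] at ha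
  rw [mul_add_mem_iff hm hrb] at hb
  rcases lt_trichotomy (ra + rb) m with hlt | heq | hgt
  · rw [show m * qa + ra + (m * qb + rb) = m * (qa + qb) + (ra + rb) by ring,
      mul_add_mem_iff hm hlt]
    rcases Nat.eq_zero_or_pos ra with rfl | hpa
    · rw [zero_add]
      omega
    rcases Nat.eq_zero_or_pos rb with rfl | hpb
    · rw [add_zero]
      omega
    have := hk.le_add hpa hpb hlt
    omega
  · rw [show m * qa + ra + (m * qb + rb) = m * (qa + qb + 1) + 0 by
      simp only [mul_add, mul_one]; omega,
      mul_add_mem_iff hm hm]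
    exact Or.inl rfl
  · rw [show m * qa + ra + (m * qb + rb) = m * (qa + qb + 1) + (ra + rb - m) by
      simp only [mul_add, mul_one]; omega, mul_add_mem_iff hm (by omega)]
    have := hk.le_add_add_one hra hrb hgt
    omega

theorem compl_finite (hm : 0 < m) : (kunzSet m k)ᶜ.Finite := by
  set K := (Finset.range m).sup k
  refine (Set.finite_Iio (m * (K + 1))).subset fun n hn => ?_
  by_contra hge
  obtain ⟨q, r, hr, rfl⟩ := exists_mul_add hm n
  have hkr : k r ≤ K := Finset.le_sup (Finset.mem_range.mpr hr)
  have hq : K + 1 ≤ q := by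
    by_contra! h
    exact hge (Set.mem_Iio.mpr (by nlinarith))
  exact hn ((mul_add_mem_iff hm hr).mpr (Or.inr (by omega)))

theorem isNumSgp (hm : 0 < m) (hk : KunzIneq m k) : IsNumSgp (kunzSet m k) :=
  ⟨Or.inl (Nat.zero_mod m), fun _ ha _ hb => add_mem hm hk ha hb, compl_finite hm⟩

theorem multS_eq (hm : 0 < m) (hpos : ∀ i, 1 ≤ i → i ≤ m - 1 → 1 ≤ k i) :
    multS (kunzSet m k) = m := by
  have hmem : m ∈ kunzSet m k := Or.inl (Nat.mod_self m)
  refine le_antisymm (Nat.sInf_le ⟨hmem, hm⟩) (le_csInf ⟨m, hmem, hm⟩ ?_)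
  rintro s ⟨hs, hs0⟩
  by_contra! hsm
  rw [← zero_add s, ← mul_zero m, mul_add_mem_iff hm (by omega)] at hs
  have := hpos s hs0 (by omega)
  omega

theorem apery_eq (hm : 0 < m) {i : ℕ} (hi0 : 0 < i) (hi : i < m) :
    apery (kunzSet m k) m i = m * k i + i := by
  have hmem : m * k i + i ∈ kunzSet m k := (mul_add_mem_iff hm hi).mpr (Or.inr le_rfl)
  have hmod : (m * k i + i) % m = i := by rw [Nat.mul_add_mod, Nat.mod_eq_of_lt hi]
  refine le_antisymm (Nat.sInf_le ⟨hmem, hmod⟩) (le_csInf ⟨_, hmem, hmod⟩ ?_)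
  rintro s ⟨hs, hsmod⟩
  obtain ⟨q, r, hr, rfl⟩ := exists_mul_add hm s
  rw [Nat.mul_add_mod, Nat.mod_eq_of_lt hr] at hsmod
  subst hsmod
  rcases (mul_add_mem_iff hm hr).mp hs with rfl | h
  · omega
  · exact Nat.add_le_add_right (Nat.mul_le_mul_left m h) _

theorem kunzS_eq (hm : 0 < m) (hpos : ∀ i, 1 ≤ i → i ≤ m - 1 → 1 ≤ k i) {i : ℕ} (hi0 : 0 < i)
    (hi : i < m) :
    kunzS (kunzSet m k) i = k i := by
  rw [kunzS_eq_apery, multS_eq hm hpos, apery_eq hm hi0 hi, Nat.add_sub_cancel,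
    Nat.mul_div_cancel_left _ hm]

end kunzSet

theorem kunz_characterization (m : ℕ) (hm : 2 ≤ m) (k : ℕ → ℕ)
    (hk : ∀ i : ℕ, 1 ≤ i → i ≤ m - 1 → 1 ≤ k i) :
    (∃ S : Set ℕ, IsNumSgp S ∧ multS S = m ∧
        ∀ i : ℕ, 1 ≤ i → i ≤ m - 1 → kunzS S i = k i) ↔ KunzIneq m k := by
  constructor
  · rintro ⟨S, hS, rfl, hkS⟩
    exact (hS.kunzIneq (by omega)).congr hkS
  · intro hK
    exact ⟨kunzSet m k, kunzSet.isNumSgp (by omega) hK, kunzSet.multS_eq (by omega) hk,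
      fun i hi0 hi => kunzSet.kunzS_eq (by omega) hk hi0 (by omega)⟩
end

section
/- Let ℓ ≥ 1 and let (k_1, …, k_{m−1}) be a tuple of integers with each k_i ∈ [ℓ, 2ℓ+1] satisfying the Kunz inequalities for multiplicity m. Then for any z ∈ [ℓ, 2ℓ], the extended tuple (k_1, …, k_{m−1}, z) satisfies the Kunz inequalities for multiplicity m+1. -/
/-!
Every value of the extended tuple lies in `[ℓ, 2ℓ+1]`, and for such tuples the wrap-around
inequalities are automatic: `k_{i+j-m} ≤ 2ℓ + 1 ≤ k_i + k_j + 1`. Among the inequalities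
`k_{i+j} ≤ k_i + k_j` only those with `i + j = m` are new, and they hold because `z ≤ 2ℓ`.
-/

open Set

section KunzExtend

variable {m l z : ℕ} {k : ℕ → ℕ}

theorem kunz_wrap_of_mem_Icc (hk : ∀ i, 1 ≤ i → i ≤ m - 1 → k i ∈ Icc l (2 * l + 1)) :
    ∀ i j, 1 ≤ i → i ≤ j → j ≤ m - 1 → m < i + j → k (i + j - m) ≤ k i + k j + 1 := by
  intro i j hi hij hj hm
  have hkt := (hk (i + j - m) (by omega) (by omega)).2
  have hki := (hk i hi (by omega)).1
  have hkj := (hk j (by omega) hj).1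
  omega

theorem extend_mem_Icc (hk : ∀ i, 1 ≤ i → i ≤ m - 1 → k i ∈ Icc l (2 * l + 1))
    (hz : z ∈ Icc l (2 * l)) :
    ∀ i, 1 ≤ i → i ≤ m + 1 - 1 → (if i = m then z else k i) ∈ Icc l (2 * l + 1) := by
  intro i hi him
  split_ifs with h
  · exact ⟨hz.1, hz.2.trans (Nat.le_succ _)⟩
  · exact hk i hi (by omega)

theorem kunz_add_extend
    (hadd : ∀ i j, 1 ≤ i → i ≤ j → j ≤ m - 1 → i + j < m → k (i + j) ≤ k i + k j)
    (hz : ∀ i j, 1 ≤ i → i ≤ j → i + j = m → z ≤ k i + k j) :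
    ∀ i j, 1 ≤ i → i ≤ j → j ≤ m + 1 - 1 → i + j < m + 1 →
      (if i + j = m then z else k (i + j)) ≤
        (if i = m then z else k i) + (if j = m then z else k j) := by
  intro i j hi hij hj hsum
  have hi_ne : i ≠ m := by omega
  have hj_ne : j ≠ m := by omega
  rw [if_neg hi_ne, if_neg hj_ne]
  split_ifs with h
  · exact hz i j hi hij h
  · exact hadd i j hi hij (by omega) (by omega)

end KunzExtend

theorem kunz_extend_general (m l : ℕ) (k : ℕ → ℕ)
    (hk : ∀ i : ℕ, 1 ≤ i → i ≤ m - 1 → k i ∈ Set.Icc l (2 * l + 1))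
    (hK : KunzIneq m k) (z : ℕ) (hz : z ∈ Set.Icc l (2 * l)) :
    KunzIneq (m + 1) (fun i => if i = m then z else k i) := by
  have hz_le_sum : ∀ i j, 1 ≤ i → i ≤ j → i + j = m → z ≤ k i + k j := by
    intro i j hi hij hsum
    have hki := (hk i hi (by omega)).1
    have hkj := (hk j (by omega) (by omega)).1
    have := hz.2
    omega
  exact ⟨kunz_add_extend hK.1 hz_le_sum, kunz_wrap_of_mem_Icc (extend_mem_Icc hk hz)⟩

theorem kunz_extend (m l : ℕ) (hm : 1 ≤ m) (hl : 1 ≤ l) (k : ℕ → ℕ)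
    (hk : ∀ i : ℕ, 1 ≤ i → i ≤ m - 1 → k i ∈ Set.Icc l (2 * l + 1))
    (hK : KunzIneq m k) (z : ℕ) (hz : z ∈ Set.Icc l (2 * l)) :
    KunzIneq (m + 1) (fun i => if i = m then z else k i) :=
  kunz_extend_general m l k hk hK z hz
end

section
/- Let ℓ ≥ 1 and let (k_1, …, k_m) be a tuple of integers with each k_i ∈ [ℓ, 2ℓ+1] satisfying the Kunz inequalities for multiplicity m+1. Then the truncated tuple (k_1, …, k_{m−1}) satisfies the Kunz inequalities for multiplicity m. -/
/-!
The inequalities `k (i + j) ≤ k i + k j` for multiplicity `m` are among those for multiplicity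
`m + 1`. The wrap-around ones `k (i + j - m) ≤ k i + k j + 1` hold for any values in
`[l, 2l + 1]`, since there the largest value is at most twice the smallest plus one.
-/

lemma le_add_add_one_of_mem_Icc {a b c l : ℕ} (ha : a ∈ Set.Icc l (2 * l + 1)) (hb : l ≤ b)
    (hc : l ≤ c) : a ≤ b + c + 1 := by
  have := ha.2
  omega

lemma KunzIneq.add_le_of_succ {m : ℕ} {k : ℕ → ℕ} (hK : KunzIneq (m + 1) k) {i j : ℕ}
    (hi : 1 ≤ i) (hij : i ≤ j) (hlt : i + j < m) : k (i + j) ≤ k i + k j :=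
  hK.1 i j hi hij (by omega) (by omega)

lemma wrap_le_of_mem_Icc {m l : ℕ} {k : ℕ → ℕ}
    (hk : ∀ i : ℕ, 1 ≤ i → i ≤ m → k i ∈ Set.Icc l (2 * l + 1)) {i j : ℕ} (hi : 1 ≤ i)
    (hij : i ≤ j) (hj : j ≤ m - 1) (hlt : m < i + j) : k (i + j - m) ≤ k i + k j + 1 :=
  le_add_add_one_of_mem_Icc (hk _ (by omega) (by omega)) (hk i hi (by omega)).1
    (hk j (by omega) (by omega)).1

theorem kunz_truncate_general (m l : ℕ) (k : ℕ → ℕ)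
    (hk : ∀ i : ℕ, 1 ≤ i → i ≤ m → k i ∈ Set.Icc l (2 * l + 1))
    (hK : KunzIneq (m + 1) k) :
    KunzIneq m k :=
  ⟨fun _ _ hi hij _ hlt => hK.add_le_of_succ hi hij hlt,
    fun _ _ hi hij hj hlt => wrap_le_of_mem_Icc hk hi hij hj hlt⟩

theorem kunz_truncate (m l : ℕ) (hl : 1 ≤ l) (k : ℕ → ℕ)
    (hk : ∀ i : ℕ, 1 ≤ i → i ≤ m → k i ∈ Set.Icc l (2 * l + 1))
    (hK : KunzIneq (m + 1) k) :
    KunzIneq m k :=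
  kunz_truncate_general m l k hk hK
end

section
/- If g is a positive integer and ℓ is an integer with g/2 < ℓ ≤ g, then the unique gapset of genus g with all Kunz coordinates in [ℓ, 2ℓ+1] is the gapset with Kunz coordinates (g), i.e., G = {1, 3, 5, …, 2g−1}. -/
/-!
A nonempty gapset contains `1`, so its multiplicity `m` is at least `2`; if `m ≥ 3`, the disjoint
residue classes of `1` and `2` alone contain at least `2ℓ > g` gaps. Hence `m = 2`, so no gap is
even, and since `2` is not a gap, `2k + 1 = 2 + (2k - 1)` being a gap forces `2k - 1` to be one:
the gaps are the first `g` odd numbers.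
-/

open Finset

lemma exists_pos_notMem (G : Finset ℕ) : ∃ s, 0 < s ∧ s ∉ G :=
  ⟨G.sup id + 1, Nat.succ_pos _, fun h => by
    have := le_sup (f := id) h
    simp only [id_eq] at this
    omega⟩

lemma mult_pos_and_notMem (G : Finset ℕ) : 0 < mult G ∧ mult G ∉ G :=
  Nat.sInf_mem (exists_pos_notMem G)

lemma mult_eq {G : Finset ℕ} {m : ℕ} (hm : 0 < m) (hmG : m ∉ G)
    (hlt : ∀ s, 0 < s → s < m → s ∈ G) : mult G = m := by
  refine le_antisymm (Nat.sInf_le ⟨hm, hmG⟩) (not_lt.1 fun h => ?_)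
  exact (mult_pos_and_notMem G).2 (hlt _ (mult_pos_and_notMem G).1 h)

lemma kunz_add_kunz_le_card (G : Finset ℕ) {i j : ℕ} (hij : i ≠ j) :
    kunz G i + kunz G j ≤ G.card := by
  calc kunz G i + kunz G j
      ≤ (G.filter (· % mult G = i)).card + (G.filter (¬ · % mult G = i)).card := by
        refine Nat.add_le_add_left (card_le_card fun z hz => ?_) _
        rw [mem_filter] at hz ⊢
        exact ⟨hz.1, hz.2.trans_ne hij.symm⟩
    _ = G.card := card_filter_add_card_filter_not _

namespace IsGapset

variable {G : Finset ℕ}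

lemma one_mem (hG : IsGapset G) (hne : G.Nonempty) : 1 ∈ G := by
  by_contra h1
  obtain ⟨z, hz⟩ := hne
  induction z using Nat.strong_induction_on with
  | _ z ih =>
    match z, hz with
    | 0, hz => exact hG.1 hz
    | 1, hz => exact h1 hz
    | n + 2, hz =>
      rcases hG.2 _ hz 1 (n + 1) one_pos n.succ_pos (by omega) with h | h
      · exact h1 h
      · exact ih (n + 1) (by omega) h

lemma notMem_of_dvd (hG : IsGapset G) {m z : ℕ} (hmG : m ∉ G) (hdvd : m ∣ z) : z ∉ G := by
  obtain ⟨k, rfl⟩ := hdvd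
  induction k with
  | zero => simpa using hG.1
  | succ k ih =>
    intro hz
    rcases Nat.eq_zero_or_pos k with rfl | hk
    · exact hmG (by simpa using hz)
    rcases Nat.eq_zero_or_pos m with rfl | hm
    · exact hG.1 (by simpa using hz)
    rcases hG.2 _ hz m (m * k) hm (Nat.mul_pos hm hk) (by ring) with h | h
    · exact hmG h
    · exact ih h

lemma two_le_mult (hG : IsGapset G) (hne : G.Nonempty) : 2 ≤ mult G := by
  obtain ⟨hpos, hnotMem⟩ := mult_pos_and_notMem G
  have : mult G ≠ 1 := fun h => hnotMem (h ▸ hG.one_mem hne)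
  omega

lemma mem_of_add_two_mem (hG : IsGapset G) (h2 : 2 ∉ G) {z : ℕ} (h : z + 2 ∈ G) : z ∈ G := by
  rcases Nat.eq_zero_or_pos z with rfl | hz
  · exact absurd h h2
  · exact (hG.2 _ h z 2 hz two_pos rfl).resolve_right h2

lemma odd_mem_of_le (hG : IsGapset G) (h2 : 2 ∉ G) {k : ℕ} (hk : 2 * k + 1 ∈ G) :
    ∀ i ≤ k, 2 * i + 1 ∈ G := by
  induction k with
  | zero => intro i hi; rwa [Nat.le_zero.1 hi]
  | succ k ih =>
    intro i hi
    rcases hi.lt_or_eq with hi | rfl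
    · exact ih (hG.mem_of_add_two_mem h2 (by convert hk using 1; ring)) i (by omega)
    · exact hk

end IsGapset

def oddGapset (g : ℕ) : Finset ℕ := (range g).image (fun j => 2 * j + 1)

lemma mem_oddGapset {g z : ℕ} : z ∈ oddGapset g ↔ z % 2 = 1 ∧ z < 2 * g := by
  simp only [oddGapset, mem_image, mem_range]
  constructor
  · rintro ⟨j, hj, rfl⟩
    omega
  · intro h
    exact ⟨z / 2, by omega, by omega⟩

lemma card_oddGapset (g : ℕ) : (oddGapset g).card = g := by
  rw [oddGapset, card_image_of_injective _ fun a b h => by simpa using h, card_range]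

lemma isGapset_oddGapset (g : ℕ) : IsGapset (oddGapset g) := by
  refine ⟨fun h => by simp [mem_oddGapset] at h, fun z hz x y hx hy hxy => ?_⟩
  simp only [mem_oddGapset] at hz ⊢
  omega

lemma mult_oddGapset {g : ℕ} (hg : 0 < g) : mult (oddGapset g) = 2 :=
  mult_eq two_pos (by simp [mem_oddGapset]) fun s hs hs2 => mem_oddGapset.2 (by omega)

lemma kunz_oddGapset_one {g : ℕ} (hg : 0 < g) : kunz (oddGapset g) 1 = g := by
  rw [kunz, mult_oddGapset hg, filter_true_of_mem fun z hz => (mem_oddGapset.1 hz).1,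
    card_oddGapset]

lemma IsGapset.eq_oddGapset_of_mult_eq_two {G : Finset ℕ} (hG : IsGapset G)
    (hm : mult G = 2) : G = oddGapset G.card := by
  have h2 : 2 ∉ G := hm ▸ (mult_pos_and_notMem G).2
  refine eq_of_subset_of_card_le (fun z hz => ?_) (card_oddGapset _).le
  have hodd : z % 2 = 1 := by
    by_contra h
    exact hG.notMem_of_dvd h2 (Nat.dvd_of_mod_eq_zero (by omega)) hz
  obtain ⟨k, rfl⟩ : ∃ k, z = 2 * k + 1 := ⟨z / 2, by omega⟩
  have hsub : oddGapset (k + 1) ⊆ G := fun x hx => by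
    obtain ⟨j, hj, rfl⟩ := mem_image.1 hx
    exact hG.odd_mem_of_le h2 hz j (by simpa [Nat.lt_succ_iff] using hj)
  have := card_le_card hsub
  rw [card_oddGapset] at this
  exact mem_oddGapset.2 ⟨hodd, by omega⟩

theorem unique_gapset_large_level_general (g l : ℕ) (h1 : g < 2 * l) (h2 : l ≤ g) :
    {G : Finset ℕ | IsGapset G ∧ G.card = g ∧
        ∀ i : ℕ, 1 ≤ i → i < mult G → kunz G i ∈ Set.Icc l (2 * l + 1)} =
      {(Finset.range g).image (fun j => 2 * j + 1)} := by
  change _ = {oddGapset g}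
  ext G
  simp only [Set.mem_ofPred_eq, Set.mem_singleton_iff]
  constructor
  · rintro ⟨hG, rfl, hk⟩
    have hm2 := hG.two_le_mult (card_pos.1 (by omega))
    have hm : mult G = 2 := by
      by_contra hm
      have hk1 := (hk 1 le_rfl (by omega)).1
      have hk2 := (hk 2 one_le_two (by omega)).1
      have := kunz_add_kunz_le_card G (i := 1) (j := 2) (by decide)
      omega
    exact hG.eq_oddGapset_of_mult_eq_two hm
  · rintro rfl
    have hg : 0 < g := by omega
    refine ⟨isGapset_oddGapset g, card_oddGapset g, fun i hi1 hi2 => ?_⟩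
    obtain rfl : i = 1 := by rw [mult_oddGapset hg] at hi2; omega
    rw [kunz_oddGapset_one hg]
    exact ⟨h2, by omega⟩

theorem unique_gapset_large_level (g l : ℕ) (hg : 0 < g) (h1 : g < 2 * l) (h2 : l ≤ g) :
    {G : Finset ℕ | IsGapset G ∧ G.card = g ∧
        ∀ i : ℕ, 1 ≤ i → i < mult G → kunz G i ∈ Set.Icc l (2 * l + 1)} =
      {(Finset.range g).image (fun j => 2 * j + 1)} :=
  unique_gapset_large_level_general g l h1 h2
end
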